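/- Let G be a finite bipartite multigraph (no loops), let k ≥ 0, and let i be an integer with 2 ≤ i ≤ k. Then ν_{k−i+2}(G) + ν_{k+i−2}(G) ≥ ν_{k−i}(G) + ν_{k+i}(G). -/

import Mathlib

/-!
For bipartite multigraphs `ν` is concave, `ν_a + ν_{a+2} ≤ 2 ν_{a+1}`, and the inequality is a sum
of such second differences. For concavity take a maximum `a`-edge-colourable `A` and a maximum
`(a+2)`-edge-colourable `B`, and split `A ∆ B` into parts `D₁, D₂` each containing at most half,
rounded up, of its edges at every vertex. Then `A ∩ B ∪ Dᵢ` has maximum degree at most `a + 1`, so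
it is `(a+1)`-edge-colourable by Kőnig's edge-colouring theorem (proved with Kempe chains), and
`|A ∩ B ∪ D₁| + |A ∩ B ∪ D₂| = |A| + |B|`.
-/

variable {V E : Type*}

/-- Degree of vertex `v` in the edge set `A` of a multigraph given by `ends`. -/
def degIn [DecidableEq V] (ends : E → Sym2 V) (A : Finset E) (v : V) : ℕ :=
  (A.filter (fun e => v ∈ ends e)).card

/-- The edge set `A` admits a proper edge coloring with at most `k` colors:
adjacent (distinct, sharing an endpoint) edges get different colors. -/
def EdgeColorable (ends : E → Sym2 V) (A : Finset E) (k : ℕ) : Prop :=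
  ∃ c : E → ℕ, (∀ e ∈ A, c e < k) ∧
    ∀ e₁ ∈ A, ∀ e₂ ∈ A, e₁ ≠ e₂ → (∃ v, v ∈ ends e₁ ∧ v ∈ ends e₂) → c e₁ ≠ c e₂

/-- `ν_k`: the maximum number of edges of a `k`-edge-colorable subgraph whose
edge set lies in `ground`. -/
noncomputable def nu (ends : E → Sym2 V) (ground : Finset E) (k : ℕ) : ℕ :=
  sSup {n | ∃ F : Finset E, F ⊆ ground ∧ EdgeColorable ends F k ∧ F.card = n}

/-- The multigraph given by `ends` is bipartite. -/
def IsBipartite (ends : E → Sym2 V) : Prop :=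
  ∃ f : V → Bool, ∀ e : E, ∀ u v : V, ends e = s(u, v) → f u ≠ f v

/-- There is an `A`-augmenting path: a simple path of odd length whose
odd-numbered (1st, 3rd, ...) edges lie outside `A`, whose even-numbered
(2nd, 4th, ...) edges belong to `A`, and whose endpoints have degree
at most `k - 1` in `A`. -/
def IsAugPath [DecidableEq V] (ends : E → Sym2 V) (A : Finset E) (k : ℕ) : Prop :=
  ∃ (m : ℕ) (vs : Fin (m + 1) → V) (es : Fin m → E),
    Odd m ∧ Function.Injective vs ∧
    (∀ i : Fin m, ends (es i) = s(vs i.castSucc, vs i.succ)) ∧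
    (∀ i : Fin m, (i : ℕ) % 2 = 0 → es i ∉ A) ∧
    (∀ i : Fin m, (i : ℕ) % 2 = 1 → es i ∈ A) ∧
    degIn ends A (vs 0) ≤ k - 1 ∧ degIn ends A (vs (Fin.last m)) ≤ k - 1

open Finset
open scoped symmDiff

section ConcaveSequence

variable {α : Type*} [AddCommMonoid α] [PartialOrder α] [IsOrderedCancelAddMonoid α]
  {f : ℕ → α}

theorem add_le_add_succ_of_concave (hf : ∀ n, f n + f (n + 2) ≤ f (n + 1) + f (n + 1))
    {a b : ℕ} (hab : a ≤ b) : f a + f (b + 1) ≤ f (a + 1) + f b := by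
  induction b, hab using Nat.le_induction with
  | base => rw [add_comm]
  | succ b _ ih =>
    refine le_of_add_le_add_right (a := f b + f (b + 1)) ?_
    convert add_le_add ih (hf b) using 1 <;> abel

theorem add_le_add_of_concave (hf : ∀ n, f n + f (n + 2) ≤ f (n + 1) + f (n + 1))
    {a b : ℕ} (hab : a ≤ b) (m : ℕ) : f a + f (b + m) ≤ f (a + m) + f b := by
  induction m with
  | zero => rw [add_zero, add_zero, add_comm]
  | succ m ih =>
    refine le_of_add_le_add_right (a := f (a + m) + f (b + m)) ?_
    have step := add_le_add_succ_of_concave hf (Nat.add_le_add_right hab m)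
    convert add_le_add ih step using 1 <;> rw [← add_assoc, ← add_assoc] <;> abel

end ConcaveSequence

theorem Finset.card_symmDiff_add_two_mul_card_inter {α : Type*} [DecidableEq α]
    (s t : Finset α) : #(s ∆ t) + 2 * #(s ∩ t) = #s + #t := by
  rw [symmDiff_eq_sup_sdiff_inf, sup_eq_union, inf_eq_inter,
    card_sdiff_of_subset inter_subset_union, ← card_union_add_card_inter s t]
  have := card_le_card (inter_subset_union (s := s) (t := t))
  omega

theorem Finset.filter_symmDiff {α : Type*} [DecidableEq α] (p : α → Prop) [DecidablePred p]
    (s t : Finset α) : (s ∆ t).filter p = s.filter p ∆ t.filter p := by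
  ext a
  simp only [mem_filter, mem_symmDiff]
  tauto

theorem exists_lt_forall_ne_of_card_lt {ι : Type*} {t : Finset ι} {d : ℕ} (c : ι → ℕ)
    (ht : #t < d) : ∃ γ < d, ∀ a ∈ t, c a ≠ γ := by
  classical
  obtain ⟨γ, hγ⟩ : (range d \ t.image c).Nonempty := by
    rw [← card_pos]
    have hd := card_le_card_sdiff_add_card (s := range d) (t := t.image c)
    have := card_image_le (s := t) (f := c)
    rw [card_range] at hd
    omega
  obtain ⟨hγd, hγt⟩ := mem_sdiff.1 hγ
  exact ⟨γ, mem_range.1 hγd, fun a ha h => hγt (mem_image.2 ⟨a, ha, h⟩)⟩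

theorem Finset.card_filter_lt_card_filter_insert {ι W : Type*} [DecidableEq ι] [DecidableEq W]
    {s : Finset ι} {e : ι} (he : e ∉ s) (z : ι → W) :
    #{a ∈ s | z a = z e} < #{a ∈ insert e s | z a = z e} := by
  rw [filter_insert, if_pos rfl, card_insert_of_notMem fun h => he (mem_filter.1 h).1]
  exact lt_add_one _

section ProperColoring

variable {L R : Type*} (x : E → L) (y : E → R)

/-- `c` is a proper edge colouring of the bipartite multigraph with edge set `s` in which the edge
`e` joins the left vertex `x e` to the right vertex `y e`. -/
def IsProperColoring (s : Finset E) (c : E → ℕ) : Prop :=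
  ∀ e₁ ∈ s, ∀ e₂ ∈ s, e₁ ≠ e₂ → (x e₁ = x e₂ ∨ y e₁ = y e₂) → c e₁ ≠ c e₂

variable {x y} {s : Finset E} {c : E → ℕ}

namespace IsProperColoring

theorem eq_of_left (hc : IsProperColoring x y s c) {a b : E} (ha : a ∈ s) (hb : b ∈ s)
    (hx : x a = x b) (hcol : c a = c b) : a = b :=
  by_contra fun hab => hc a ha b hb hab (.inl hx) hcol

theorem eq_of_right (hc : IsProperColoring x y s c) {a b : E} (ha : a ∈ s) (hb : b ∈ s)
    (hy : y a = y b) (hcol : c a = c b) : a = b :=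
  by_contra fun hab => hc a ha b hb hab (.inr hy) hcol

theorem card_filter_left_le [DecidableEq L] {d : ℕ} (hc : IsProperColoring x y s c)
    (hcd : ∀ e ∈ s, c e < d) (l : L) : #{e ∈ s | x e = l} ≤ d := by
  simpa using card_le_card_of_injOn c (t := range d)
    (fun e he => mem_range.2 (hcd e (mem_filter.1 he).1))
    (fun a ha b hb hab => hc.eq_of_left (mem_filter.1 ha).1 (mem_filter.1 hb).1
      ((mem_filter.1 ha).2.trans (mem_filter.1 hb).2.symm) hab)

theorem card_filter_right_le [DecidableEq R] {d : ℕ} (hc : IsProperColoring x y s c)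
    (hcd : ∀ e ∈ s, c e < d) (r : R) : #{e ∈ s | y e = r} ≤ d := by
  simpa using card_le_card_of_injOn c (t := range d)
    (fun e he => mem_range.2 (hcd e (mem_filter.1 he).1))
    (fun a ha b hb hab => hc.eq_of_right (mem_filter.1 ha).1 (mem_filter.1 hb).1
      ((mem_filter.1 ha).2.trans (mem_filter.1 hb).2.symm) hab)

theorem insert [DecidableEq E] {e : E} {γ : ℕ} (hc : IsProperColoring x y s c) (he : e ∉ s)
    (hγ : ∀ a ∈ s, (x a = x e ∨ y a = y e) → c a ≠ γ) :
    IsProperColoring x y (insert e s) (Function.update c e γ) := by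
  have hne : ∀ a ∈ s, a ≠ e := fun a ha hae => he (hae ▸ ha)
  intro a ha b hb hab hadj
  rcases mem_insert.1 ha with rfl | ha' <;> rcases mem_insert.1 hb with rfl | hb'
  · exact absurd rfl hab
  · rw [Function.update_self, Function.update_of_ne (hne b hb')]
    exact (hγ b hb' (hadj.imp Eq.symm Eq.symm)).symm
  · rw [Function.update_self, Function.update_of_ne (hne a ha')]
    exact hγ a ha' hadj
  · rw [Function.update_of_ne (hne a ha'), Function.update_of_ne (hne b hb')]
    exact hc a ha' b hb' hab hadj

theorem swap (hc : IsProperColoring x y s c) {α β : ℕ} (S : Set E) [DecidablePred (· ∈ S)]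
    (hS : ∀ a ∈ S, c a = α ∨ c a = β)
    (hclosed : ∀ a ∈ S, ∀ b ∈ s, a ≠ b → (x a = x b ∨ y a = y b) → (c b = α ∨ c b = β) → b ∈ S) :
    IsProperColoring x y s (fun a => if a ∈ S then Equiv.swap α β (c a) else c a) := by
  have hswap : ∀ a ∈ S, Equiv.swap α β (c a) = α ∨ Equiv.swap α β (c a) = β := by
    intro a ha
    rcases hS a ha with h | h <;> simp [h]
  intro a ha b hb hab hadj
  by_cases haS : a ∈ S <;> by_cases hbS : b ∈ S <;> simp only [haS, hbS, if_true, if_false]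
  · exact (Equiv.injective _).ne (hc a ha b hb hab hadj)
  · have hb' : c b ≠ α ∧ c b ≠ β := not_or.1 fun h => hbS (hclosed a haS b hb hab hadj h)
    rcases hswap a haS with h | h <;> rw [h] <;> [exact hb'.1.symm; exact hb'.2.symm]
  · have ha' : c a ≠ α ∧ c a ≠ β := not_or.1 fun h =>
      haS (hclosed b hbS a ha (Ne.symm hab) (hadj.imp Eq.symm Eq.symm) h)
    rcases hswap b hbS with h | h <;> rw [h] <;> [exact ha'.1; exact ha'.2]
  · exact hc a ha b hb hab hadj

end IsProperColoring

end ProperColoring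

section Kempe

variable {L R : Type*} {x : E → L} {y : E → R} {s : Finset E} {c : E → ℕ} {α β : ℕ} {e₀ : E}

variable (x y s c α β) in
/-- A step along an `α`/`β`-alternating walk: a `β`-edge is left through its right end and an
`α`-edge through its left end. -/
def KempeStep (a b : E) : Prop :=
  a ∈ s ∧ b ∈ s ∧ (c a = β ∧ c b = α ∧ y a = y b ∨ c a = α ∧ c b = β ∧ x a = x b)

variable (x y s c α β) in
def kempeChain (e₀ : E) : Set E :=
  {a | Relation.ReflTransGen (KempeStep x y s c α β) e₀ a}

theorem mem_kempeChain (he₀ : e₀ ∈ s) (hβ : c e₀ = β) {a : E}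
    (ha : a ∈ kempeChain x y s c α β e₀) : a ∈ s ∧ (c a = α ∨ c a = β) := by
  rcases Relation.ReflTransGen.cases_tail ha with rfl | ⟨p, -, -, hb, hcol⟩
  · exact ⟨he₀, .inr hβ⟩
  · exact ⟨hb, hcol.imp (·.2.1) (·.2.1)⟩

theorem kempeChain_closed (he₀ : e₀ ∈ s) (hβ : c e₀ = β) (hc : IsProperColoring x y s c)
    (hαβ : α ≠ β) (hα : ∀ a ∈ s, x a = x e₀ → c a ≠ α) {a b : E}
    (ha : a ∈ kempeChain x y s c α β e₀) (hb : b ∈ s) (hab : a ≠ b)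
    (hadj : x a = x b ∨ y a = y b) (hcb : c b = α ∨ c b = β) :
    b ∈ kempeChain x y s c α β e₀ := by
  obtain ⟨has, hca⟩ := mem_kempeChain he₀ hβ ha
  have hne : c a ≠ c b := hc a has b hb hab hadj
  rcases hca with hca | hca <;> rcases hcb with hcb | hcb
  · exact absurd (hca.trans hcb.symm) hne
  · rcases hadj with hx | hy
    · exact ha.tail ⟨has, hb, .inr ⟨hca, hcb, hx⟩⟩
    -- `a` was entered through its right end, from the `β`-edge there, which must be `b`
    rcases Relation.ReflTransGen.cases_tail ha with rfl | ⟨p, hp, hps, -, hstep⟩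
    · exact absurd (hca.symm.trans hβ) hαβ
    rcases hstep with ⟨hpβ, -, hpy⟩ | ⟨-, haβ, -⟩
    · rwa [← hc.eq_of_right hps hb (hpy.trans hy) (hpβ.trans hcb.symm)]
    · exact absurd (hca.symm.trans haβ) hαβ
  · rcases hadj with hx | hy
    -- `a` was entered through its left end, from the `α`-edge there, which must be `b`
    · rcases Relation.ReflTransGen.cases_tail ha with rfl | ⟨p, hp, hps, -, hstep⟩
      · exact absurd hcb (hα b hb hx.symm)
      rcases hstep with ⟨-, haα, -⟩ | ⟨hpα, -, hpx⟩
      · exact absurd (haα.symm.trans hca) hαβ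
      · rwa [← hc.eq_of_left hps hb (hpx.trans hx) (hpα.trans hcb.symm)]
    · exact ha.tail ⟨has, hb, .inl ⟨hca, hcb, hy⟩⟩
  · exact absurd (hca.trans hcb.symm) hne

theorem right_ne_of_mem_kempeChain (he₀ : e₀ ∈ s) (hβ : c e₀ = β) (hαβ : α ≠ β) {r : R}
    (hr : ∀ a ∈ s, y a = r → c a ≠ β) {a : E} (ha : a ∈ kempeChain x y s c α β e₀) : y a ≠ r := by
  intro hya
  rcases (mem_kempeChain he₀ hβ ha).2 with hca | hca
  · rcases Relation.ReflTransGen.cases_tail ha with rfl | ⟨p, -, hps, -, hstep⟩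
    · exact hαβ (hca.symm.trans hβ)
    rcases hstep with ⟨hpβ, -, hpy⟩ | ⟨-, haβ, -⟩
    · exact hr p hps (hpy.trans hya) hpβ
    · exact hαβ (hca.symm.trans haβ)
  · exact hr a (mem_kempeChain he₀ hβ ha).1 hya hca

end Kempe

section Koenig

variable {L R : Type*} [DecidableEq L] [DecidableEq R] {x : E → L} {y : E → R}
  {s : Finset E} {c : E → ℕ} {d : ℕ}

theorem IsProperColoring.exists_recolor_free (hc : IsProperColoring x y s c)
    (hcd : ∀ a ∈ s, c a < d) {l : L} {r : R} (hl : #{a ∈ s | x a = l} < d)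
    (hr : #{a ∈ s | y a = r} < d) :
    ∃ c' : E → ℕ, (∀ a ∈ s, c' a < d) ∧ IsProperColoring x y s c' ∧
      ∃ γ < d, ∀ a ∈ s, (x a = l ∨ y a = r) → c' a ≠ γ := by
  classical
  obtain ⟨α, hαd, hαl⟩ := exists_lt_forall_ne_of_card_lt c hl
  obtain ⟨β, hβd, hβr⟩ := exists_lt_forall_ne_of_card_lt c hr
  simp only [mem_filter, and_imp] at hαl hβr
  by_cases hβl : ∀ a ∈ s, x a = l → c a ≠ β
  · exact ⟨c, hcd, hc, β, hβd, fun a ha => Or.rec (hβl a ha) (hβr a ha)⟩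
  -- otherwise exchange `α` and `β` along the alternating walk starting at the `β`-edge `e₀` at `l`
  push Not at hβl
  obtain ⟨e₀, he₀, rfl, hβ⟩ := hβl
  have hαβ : α ≠ β := fun h => hαl e₀ he₀ rfl (hβ.trans h.symm)
  set S := kempeChain x y s c α β e₀
  refine ⟨fun a => if a ∈ S then Equiv.swap α β (c a) else c a, ?_,
    hc.swap S (fun a ha => (mem_kempeChain he₀ hβ ha).2)
      (fun a ha b hb => kempeChain_closed he₀ hβ hc hαβ hαl ha hb), β, hβd, ?_⟩
  · intro a ha
    by_cases haS : a ∈ S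
    · rcases (mem_kempeChain he₀ hβ haS).2 with h | h <;> simpa [haS, h]
    · simpa [haS] using hcd a ha
  · intro a ha hadj
    by_cases haS : a ∈ S
    · have : c a ≠ α := by
        rcases hadj with h | h
        · exact hαl a ha h
        · exact fun _ => right_ne_of_mem_kempeChain he₀ hβ hαβ hβr haS h
      simpa [haS, Equiv.swap_apply_eq_iff] using this
    · simp only [haS, if_false]
      rintro rfl
      rcases hadj with h | h
      · exact haS (hc.eq_of_left he₀ ha h.symm hβ ▸ Relation.ReflTransGen.refl)
      · exact hβr a ha h rfl

theorem exists_isProperColoring_of_card_filter_le [DecidableEq E] (A : Finset E)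
    (hx : ∀ l, #{e ∈ A | x e = l} ≤ d) (hy : ∀ r, #{e ∈ A | y e = r} ≤ d) :
    ∃ c : E → ℕ, (∀ e ∈ A, c e < d) ∧ IsProperColoring x y A c := by
  induction A using Finset.induction_on with
  | empty => exact ⟨fun _ => 0, by simp, by simp [IsProperColoring]⟩
  | @insert e s he ih =>
    obtain ⟨c, hcd, hc⟩ :=
      ih (fun l => (card_le_card (filter_subset_filter _ (subset_insert e s))).trans (hx l))
        (fun r => (card_le_card (filter_subset_filter _ (subset_insert e s))).trans (hy r))
    obtain ⟨c', hcd', hc', γ, hγd, hγ⟩ := hc.exists_recolor_free hcd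
      ((card_filter_lt_card_filter_insert he x).trans_le (hx (x e)))
      ((card_filter_lt_card_filter_insert he y).trans_le (hy (y e)))
    refine ⟨Function.update c' e γ, fun a ha => ?_, hc'.insert he hγ⟩
    rcases mem_insert.1 ha with rfl | ha
    · simpa using hγd
    · rw [Function.update_of_ne (ne_of_mem_of_not_mem ha he)]
      exact hcd' a ha

end Koenig

section Halving

variable {W : Type*} [DecidableEq W] {z : E → W} {D : Finset E}

variable (z) in
def IsHalf (D' D : Finset E) : Prop :=
  ∀ w, 2 * #{e ∈ D' | z e = w} ≤ #{e ∈ D | z e = w} + 1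

variable [LinearOrder E]

variable (z D) in
def rankAt (e : E) : ℕ := #{a ∈ D | z a = z e ∧ a < e}

theorem rankAt_lt {e : E} (he : e ∈ D) : rankAt z D e < #{a ∈ D | z a = z e} :=
  card_lt_card ⟨monotone_filter_right D fun _ _ => And.left, fun h => by
    simpa using (mem_filter.1 (h (mem_filter.2 ⟨he, rfl⟩))).2.2⟩

theorem rankAt_lt_rankAt {a b : E} (ha : a ∈ D) (hz : z a = z b) (hab : a < b) :
    rankAt z D a < rankAt z D b := by
  refine card_lt_card ⟨fun e he => ?_, fun h => ?_⟩
  · simp only [mem_filter] at he ⊢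
    exact ⟨he.1, he.2.1.trans hz, he.2.2.trans hab⟩
  · simpa using (mem_filter.1 (h (mem_filter.2 ⟨ha, hz, hab⟩))).2.2

theorem eq_of_rankAt_eq {a b : E} (ha : a ∈ D) (hb : b ∈ D) (hz : z a = z b)
    (hr : rankAt z D a = rankAt z D b) : a = b := by
  rcases lt_trichotomy a b with h | h | h
  · exact absurd hr (rankAt_lt_rankAt ha hz h).ne
  · exact h
  · exact absurd hr (rankAt_lt_rankAt hb hz.symm h).ne'

theorem card_filter_rankAt_div_two_le (w : W × ℕ) :
    #{e ∈ D | (z e, rankAt z D e / 2) = w} ≤ 2 := by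
  refine (card_le_card_of_injOn (rankAt z D) (t := {2 * w.2, 2 * w.2 + 1}) ?_ ?_).trans
    card_le_two
  · intro e he
    have := congrArg Prod.snd (mem_filter.1 he).2
    simp only [coe_insert, coe_singleton, Set.mem_insert_iff, Set.mem_singleton_iff] at this ⊢
    omega
  · intro a ha b hb hr
    simp only [mem_coe, mem_filter] at ha hb
    exact eq_of_rankAt_eq ha.1 hb.1 (congrArg Prod.fst (ha.2.trans hb.2.symm)) hr

theorem isHalf_filter_color_eq {c : E → ℕ}
    (hc : ∀ a ∈ D, ∀ b ∈ D, z a = z b → rankAt z D a / 2 = rankAt z D b / 2 → c a = c b → a = b)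
    (k : ℕ) : IsHalf z {e ∈ D | c e = k} D := by
  intro w
  have := card_le_card_of_injOn (fun e => rankAt z D e / 2)
    (s := {e ∈ {e ∈ D | c e = k} | z e = w}) (t := range ((#{e ∈ D | z e = w} + 1) / 2))
    (fun e he => by
      simp only [mem_coe, mem_filter, mem_range] at he ⊢
      have := rankAt_lt (z := z) he.1.1
      rw [he.2] at this
      omega)
    (fun a ha b hb hr => by
      simp only [mem_coe, mem_filter] at ha hb
      exact hc a ha.1.1 b hb.1.1 (ha.2.trans hb.2.symm) hr (ha.1.2.trans hb.1.2.symm))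
  rw [card_range] at this
  omega

/-- Kőnig's theorem with two colours, after splitting every vertex `w` into vertices `(w, q)` that
carry the edges of rank `2q` and `2q + 1` at `w`. -/
theorem exists_isHalf {L R : Type*} [DecidableEq L] [DecidableEq R] (x : E → L) (y : E → R)
    (D : Finset E) : ∃ D₁ ⊆ D, IsHalf x D₁ D ∧ IsHalf y D₁ D ∧
      IsHalf x (D \ D₁) D ∧ IsHalf y (D \ D₁) D := by
  obtain ⟨c, hc2, hc⟩ := exists_isProperColoring_of_card_filter_le (d := 2)
    (x := fun e => (x e, rankAt x D e / 2)) (y := fun e => (y e, rankAt y D e / 2)) D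
    card_filter_rankAt_div_two_le card_filter_rankAt_div_two_le
  have hx := isHalf_filter_color_eq (z := x) (c := c) fun a ha b hb hz hr =>
    hc.eq_of_left ha hb (Prod.ext hz hr)
  have hy := isHalf_filter_color_eq (z := y) (c := c) fun a ha b hb hz hr =>
    hc.eq_of_right ha hb (Prod.ext hz hr)
  have hcompl : D \ {e ∈ D | c e = 0} = {e ∈ D | c e = 1} := by
    ext e
    simp only [mem_sdiff, mem_filter, not_and]
    constructor
    · rintro ⟨he, h⟩
      exact ⟨he, by have := hc2 e he; have := h he; omega⟩
    · rintro ⟨he, h⟩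
      exact ⟨he, fun _ => by omega⟩
  refine ⟨{e ∈ D | c e = 0}, filter_subset _ _, hx 0, hy 0, ?_, ?_⟩ <;> rw [hcompl]
  exacts [hx 1, hy 1]

end Halving

theorem card_filter_inter_union_le {W : Type*} [DecidableEq E] [DecidableEq W] {z : E → W}
    {A B D' : Finset E} {a : ℕ} (hA : ∀ w, #{e ∈ A | z e = w} ≤ a)
    (hB : ∀ w, #{e ∈ B | z e = w} ≤ a + 2) (hD' : D' ⊆ A ∆ B) (hhalf : IsHalf z D' (A ∆ B))
    (w : W) : #{e ∈ A ∩ B ∪ D' | z e = w} ≤ a + 1 := by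
  have hdisj : Disjoint (A ∩ B) D' := (disjoint_symmDiff_inf (a := A) (b := B)).symm.mono_right hD'
  have hcard := card_symmDiff_add_two_mul_card_inter {e ∈ A | z e = w} {e ∈ B | z e = w}
  rw [← filter_inter_distrib, ← filter_symmDiff] at hcard
  rw [filter_union, card_union_of_disjoint (disjoint_filter_filter hdisj)]
  have := hhalf w
  have := hA w
  have := hB w
  omega

section Nu

variable {ends : E → Sym2 V} {ground : Finset E} {k : ℕ}

variable (ends ground k) in
theorem bddAbove_card_edgeColorable :
    BddAbove {n | ∃ F : Finset E, F ⊆ ground ∧ EdgeColorable ends F k ∧ #F = n} :=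
  ⟨#ground, by rintro n ⟨F, hF, -, rfl⟩; exact card_le_card hF⟩

theorem card_le_nu {F : Finset E} (hF : F ⊆ ground) (h : EdgeColorable ends F k) :
    #F ≤ nu ends ground k :=
  le_csSup (bddAbove_card_edgeColorable ends ground k) ⟨F, hF, h, rfl⟩

variable (ends ground k) in
theorem exists_card_eq_nu :
    ∃ F ⊆ ground, EdgeColorable ends F k ∧ #F = nu ends ground k :=
  Nat.sSup_mem (s := {n | ∃ F : Finset E, F ⊆ ground ∧ EdgeColorable ends F k ∧ #F = n})
    ⟨0, ∅, empty_subset _, ⟨fun _ => 0, by simp, by simp⟩, rfl⟩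
    (bddAbove_card_edgeColorable ends ground k)

theorem IsBipartite.exists_orientation (h : IsBipartite ends) :
    ∃ x y : E → V, (∀ e, ends e = s(x e, y e)) ∧ ∀ e₁ e₂, x e₁ ≠ y e₂ := by
  obtain ⟨f, hf⟩ := h
  have orient : ∀ z : Sym2 V, (∀ u v, z = s(u, v) → f u ≠ f v) →
      ∃ p : V × V, z = s(p.1, p.2) ∧ f p.1 = true ∧ f p.2 = false := by
    refine Sym2.ind fun u v huv => ?_
    have := huv u v rfl
    cases hu : f u
    · exact ⟨(v, u), Sym2.eq_swap, by simpa [hu] using this.symm, hu⟩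
    · exact ⟨(u, v), rfl, hu, by simpa [hu] using this.symm⟩
  choose p hp using fun e => orient (ends e) (hf e)
  refine ⟨fun e => (p e).1, fun e => (p e).2, fun e => (hp e).1, fun e₁ e₂ h => ?_⟩
  have h₁ := (hp e₁).2.1
  have h₂ := (hp e₂).2.2
  simp only at h
  simp [h, h₂] at h₁

theorem edgeColorable_iff_isProperColoring {x y : E → V} (hends : ∀ e, ends e = s(x e, y e))
    (hxy : ∀ e₁ e₂, x e₁ ≠ y e₂) {F : Finset E} :
    EdgeColorable ends F k ↔ ∃ c : E → ℕ, (∀ e ∈ F, c e < k) ∧ IsProperColoring x y F c := by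
  have hadj : ∀ e₁ e₂, (∃ v, v ∈ ends e₁ ∧ v ∈ ends e₂) ↔ x e₁ = x e₂ ∨ y e₁ = y e₂ := by
    intro e₁ e₂
    simp only [hends, Sym2.mem_iff]
    constructor
    · rintro ⟨v, h₁ | h₁, h₂ | h₂⟩
      · exact .inl (h₁.symm.trans h₂)
      · exact absurd (h₁.symm.trans h₂) (hxy _ _)
      · exact absurd (h₂.symm.trans h₁) (hxy _ _)
      · exact .inr (h₁.symm.trans h₂)
    · rintro (h | h)
      exacts [⟨_, .inl rfl, .inl h⟩, ⟨_, .inr rfl, .inr h⟩]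
  simp only [EdgeColorable, IsProperColoring, hadj]

theorem nu_add_nu_add_two_le (hbip : IsBipartite ends) (ground : Finset E) (a : ℕ) :
    nu ends ground a + nu ends ground (a + 2) ≤
      nu ends ground (a + 1) + nu ends ground (a + 1) := by
  let _ : LinearOrder E := IsWellOrder.linearOrder WellOrderingRel
  classical
  obtain ⟨x, y, hends, hxy⟩ := hbip.exists_orientation
  obtain ⟨A, hAg, hA, hAcard⟩ := exists_card_eq_nu ends ground a
  obtain ⟨B, hBg, hB, hBcard⟩ := exists_card_eq_nu ends ground (a + 2)
  obtain ⟨cA, hcAd, hcA⟩ := (edgeColorable_iff_isProperColoring hends hxy).1 hA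
  obtain ⟨cB, hcBd, hcB⟩ := (edgeColorable_iff_isProperColoring hends hxy).1 hB
  have hmerge : ∀ D' ⊆ A ∆ B, IsHalf x D' (A ∆ B) → IsHalf y D' (A ∆ B) →
      #(A ∩ B ∪ D') ≤ nu ends ground (a + 1) := by
    intro D' hD' hx hy
    refine card_le_nu (union_subset (inter_subset_left.trans hAg)
      (hD'.trans (symmDiff_subset_union.trans (union_subset hAg hBg))))
      ((edgeColorable_iff_isProperColoring hends hxy).2
        (exists_isProperColoring_of_card_filter_le _ ?_ ?_))
    · exact card_filter_inter_union_le (hcA.card_filter_left_le hcAd)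
        (hcB.card_filter_left_le hcBd) hD' hx
    · exact card_filter_inter_union_le (hcA.card_filter_right_le hcAd)
        (hcB.card_filter_right_le hcBd) hD' hy
  obtain ⟨D₁, hD₁, hx₁, hy₁, hx₂, hy₂⟩ := exists_isHalf x y (A ∆ B)
  have hdisj : Disjoint (A ∩ B) (A ∆ B) := (disjoint_symmDiff_inf (a := A) (b := B)).symm
  have hcard₁ := card_union_of_disjoint (hdisj.mono_right hD₁)
  have hcard₂ := card_union_of_disjoint (hdisj.mono_right (sdiff_subset (s := A ∆ B) (t := D₁)))
  have := card_sdiff_add_card_eq_card hD₁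
  have := card_symmDiff_add_two_mul_card_inter A B
  have := hmerge D₁ hD₁ hx₁ hy₁
  have := hmerge _ sdiff_subset hx₂ hy₂
  omega

end Nu

theorem stmt_11_general [Fintype E] (ends : E → Sym2 V) (hbip : IsBipartite ends)
    (k i : ℕ) (h2i : 2 ≤ i) (hik : i ≤ k) :
    nu ends (Finset.univ : Finset E) (k - i + 2) +
        nu ends (Finset.univ : Finset E) (k + i - 2) ≥
      nu ends (Finset.univ : Finset E) (k - i) +
        nu ends (Finset.univ : Finset E) (k + i) := by
  have h := add_le_add_of_concave (nu_add_nu_add_two_le hbip univ)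
    (show k - i ≤ k + i - 2 by omega) 2
  rwa [show k + i - 2 + 2 = k + i by omega] at h

/-- For a finite bipartite loopless multigraph `G` and `2 ≤ i ≤ k`:
`ν_{k-i+2}(G) + ν_{k+i-2}(G) ≥ ν_{k-i}(G) + ν_{k+i}(G)`. -/
theorem stmt_11 [Fintype V] [Fintype E] [DecidableEq V] (ends : E → Sym2 V)
    (hloop : ∀ e : E, ¬ (ends e).IsDiag) (hbip : IsBipartite ends)
    (k i : ℕ) (h2i : 2 ≤ i) (hik : i ≤ k) :
    nu ends (Finset.univ : Finset E) (k - i + 2) +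
        nu ends (Finset.univ : Finset E) (k + i - 2) ≥
      nu ends (Finset.univ : Finset E) (k - i) +
        nu ends (Finset.univ : Finset E) (k + i) :=
  stmt_11_general ends hbip k i h2i hik
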